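/- Consider the semidiscrete finite volume scheme for the 2D Navier–Stokes–Korteweg system on the periodic N×N grid. Suppose ρ, m, n : ℝ → (ZMod N × ZMod N → ℝ) satisfy, for every time t and every index (i,j), ρ_{i,j}(t) > 0 and the ODEs (in the sense of HasDerivAt) −dρ_{i,j}/dt = ∇ᶜ_x(ρu)_{i,j} + ∇ᶜ_y(ρv)_{i,j} − λ(t) h Δ_h ρ_{i,j}, −dm_{i,j}/dt = ∇ᶜ_x(ρu²)_{i,j} + ∇ᶜ_y(ρuv)_{i,j} + ∇ᶜ_x(p∘ρ)_{i,j} − μ Δ_h u_{i,j} − λ(t) h Δ_h m_{i,j} − κ [ ∇⁻_x( (ρ_{i,j}Δ_hρ_{i+1,j} + ρ_{i+1,j}Δ_hρ_{i,j})/2 ) − (1/2)∇⁻_x( (∇⁺_xρ)² )_{i,j} + (1/2)∇⁻_x( ∇⁻_yρ_{·+1,·}·∇⁻_yρ )_{i,j} − ∇⁻_y( ∇ᶜ_xρ · ∇⁺_yρ )_{i,j} ], and −dn_{i,j}/dt given by the symmetric expression with the roles of x and y (and of u and v) interchanged, where u = m/ρ and v = n/ρ. Then the total mass t ↦ ∑_{i,j}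 ρ_{i,j}(t) is constant in time, i.e. its derivative is zero at every t. -/

import Mathlib

/-!
Only the density equation matters. Every term on its right-hand side is a combination of
translates of a grid function on the periodic grid, and translation does not change a sum over
`ZMod N × ZMod N`; hence the right-hand sides sum to zero, and so does the derivative of the
total mass.
-/

open Finset

noncomputable section

/-- Grid spacing `h = 1/N`. -/
def hh (N : ℕ) : ℝ := 1 / (N : ℝ)

/-- Central difference in `x`: `∇ᶜ_xφ_{i,j} = (φ_{i+1,j} − φ_{i−1,j})/(2h)`. -/
def dCx (N : ℕ) (φ : ZMod N × ZMod N → ℝ) (q : ZMod N × ZMod N) : ℝ :=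
  (φ (q.1 + 1, q.2) - φ (q.1 - 1, q.2)) / (2 * hh N)

/-- Central difference in `y`: `∇ᶜ_yφ_{i,j} = (φ_{i,j+1} − φ_{i,j−1})/(2h)`. -/
def dCy (N : ℕ) (φ : ZMod N × ZMod N → ℝ) (q : ZMod N × ZMod N) : ℝ :=
  (φ (q.1, q.2 + 1) - φ (q.1, q.2 - 1)) / (2 * hh N)

/-- Forward difference in `x`: `∇⁺_xφ_{i,j} = (φ_{i+1,j} − φ_{i,j})/h`. -/
def dPx (N : ℕ) (φ : ZMod N × ZMod N → ℝ) (q : ZMod N × ZMod N) : ℝ :=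
  (φ (q.1 + 1, q.2) - φ q) / hh N

/-- Forward difference in `y`: `∇⁺_yφ_{i,j} = (φ_{i,j+1} − φ_{i,j})/h`. -/
def dPy (N : ℕ) (φ : ZMod N × ZMod N → ℝ) (q : ZMod N × ZMod N) : ℝ :=
  (φ (q.1, q.2 + 1) - φ q) / hh N

/-- Backward difference in `x`: `∇⁻_xφ_{i,j} = (φ_{i,j} − φ_{i−1,j})/h`. -/
def dMx (N : ℕ) (φ : ZMod N × ZMod N → ℝ) (q : ZMod N × ZMod N) : ℝ :=
  (φ q - φ (q.1 - 1, q.2)) / hh N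

/-- Backward difference in `y`: `∇⁻_yφ_{i,j} = (φ_{i,j} − φ_{i,j−1})/h`. -/
def dMy (N : ℕ) (φ : ZMod N × ZMod N → ℝ) (q : ZMod N × ZMod N) : ℝ :=
  (φ q - φ (q.1, q.2 - 1)) / hh N

/-- Discrete Laplacian in `x`: `Δ_{h,x}φ_{i,j} = (φ_{i+1,j} − 2φ_{i,j} + φ_{i−1,j})/h²`. -/
def dLx (N : ℕ) (φ : ZMod N × ZMod N → ℝ) (q : ZMod N × ZMod N) : ℝ :=
  (φ (q.1 + 1, q.2) - 2 * φ q + φ (q.1 - 1, q.2)) / (hh N) ^ 2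

/-- Discrete Laplacian in `y`: `Δ_{h,y}φ_{i,j} = (φ_{i,j+1} − 2φ_{i,j} + φ_{i,j−1})/h²`. -/
def dLy (N : ℕ) (φ : ZMod N × ZMod N → ℝ) (q : ZMod N × ZMod N) : ℝ :=
  (φ (q.1, q.2 + 1) - 2 * φ q + φ (q.1, q.2 - 1)) / (hh N) ^ 2

/-- Full discrete Laplacian `Δ_h = Δ_{h,x} + Δ_{h,y}`. -/
def dL2 (N : ℕ) (φ : ZMod N × ZMod N → ℝ) (q : ZMod N × ZMod N) : ℝ :=
  dLx N φ q + dLy N φ q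

/-- The capillarity bracket appearing in the `x`-momentum equation of the 2D scheme. -/
def Kx (N : ℕ) (ρ : ZMod N × ZMod N → ℝ) (q : ZMod N × ZMod N) : ℝ :=
  dMx N (fun r => (ρ r * dL2 N ρ (r.1 + 1, r.2) + ρ (r.1 + 1, r.2) * dL2 N ρ r) / 2) q
    - (1 / 2) * dMx N (fun r => (dPx N ρ r) ^ 2) q
    + (1 / 2) * dMx N (fun r => dMy N ρ (r.1 + 1, r.2) * dMy N ρ r) q
    - dMy N (fun r => dCx N ρ r * dPy N ρ r) q

/-- The capillarity bracket appearing in the `y`-momentum equation of the 2D scheme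
(the symmetric expression with the roles of `x` and `y` interchanged). -/
def Ky (N : ℕ) (ρ : ZMod N × ZMod N → ℝ) (q : ZMod N × ZMod N) : ℝ :=
  dMy N (fun r => (ρ r * dL2 N ρ (r.1, r.2 + 1) + ρ (r.1, r.2 + 1) * dL2 N ρ r) / 2) q
    - (1 / 2) * dMy N (fun r => (dPy N ρ r) ^ 2) q
    + (1 / 2) * dMy N (fun r => dMx N ρ (r.1, r.2 + 1) * dMx N ρ r) q
    - dMx N (fun r => dCy N ρ r * dPx N ρ r) q

/-- Right-hand side of the 2D semidiscrete density equation: `−dρ_{i,j}/dt = F2rho`. -/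
def F2rho (N : ℕ) (lamt : ℝ) (ρ m n : ZMod N × ZMod N → ℝ) (q : ZMod N × ZMod N) : ℝ :=
  dCx N (fun r => ρ r * (m r / ρ r)) q + dCy N (fun r => ρ r * (n r / ρ r)) q
    - lamt * hh N * dL2 N ρ q

/-- Right-hand side of the 2D semidiscrete `x`-momentum equation: `−dm_{i,j}/dt = F2m`. -/
def F2m (N : ℕ) (p : ℝ → ℝ) (μ κ lamt : ℝ) (ρ m n : ZMod N × ZMod N → ℝ)
    (q : ZMod N × ZMod N) : ℝ :=
  dCx N (fun r => ρ r * (m r / ρ r) ^ 2) q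
    + dCy N (fun r => ρ r * (m r / ρ r) * (n r / ρ r)) q
    + dCx N (fun r => p (ρ r)) q
    - μ * dL2 N (fun r => m r / ρ r) q
    - lamt * hh N * dL2 N m q
    - κ * Kx N ρ q

/-- Right-hand side of the 2D semidiscrete `y`-momentum equation: `−dn_{i,j}/dt = F2n`. -/
def F2n (N : ℕ) (p : ℝ → ℝ) (μ κ lamt : ℝ) (ρ m n : ZMod N × ZMod N → ℝ)
    (q : ZMod N × ZMod N) : ℝ :=
  dCy N (fun r => ρ r * (n r / ρ r) ^ 2) q
    + dCx N (fun r => ρ r * (m r / ρ r) * (n r / ρ r)) q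
    + dCy N (fun r => p (ρ r)) q
    - μ * dL2 N (fun r => n r / ρ r) q
    - lamt * hh N * dL2 N n q
    - κ * Ky N ρ q

section Shift

variable {α β M : Type*} [Fintype α] [Fintype β] [AddCommMonoid M]

theorem sum_comp_add_fst [AddGroup α] (c : α) (φ : α × β → M) :
    ∑ q : α × β, φ (q.1 + c, q.2) = ∑ q, φ q :=
  Fintype.sum_equiv ((Equiv.addRight c).prodCongr (Equiv.refl β)) _ _ fun _ => rfl

theorem sum_comp_add_snd [AddGroup β] (c : β) (φ : α × β → M) :
    ∑ q : α × β, φ (q.1, q.2 + c) = ∑ q, φ q :=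
  Fintype.sum_equiv ((Equiv.refl α).prodCongr (Equiv.addRight c)) _ _ fun _ => rfl

theorem sum_comp_sub_fst [AddGroup α] (c : α) (φ : α × β → M) :
    ∑ q : α × β, φ (q.1 - c, q.2) = ∑ q, φ q := by
  simpa only [sub_eq_add_neg] using sum_comp_add_fst (-c) φ

theorem sum_comp_sub_snd [AddGroup β] (c : β) (φ : α × β → M) :
    ∑ q : α × β, φ (q.1, q.2 - c) = ∑ q, φ q := by
  simpa only [sub_eq_add_neg] using sum_comp_add_snd (-c) φ

end Shift

section PeriodicSums

variable {N : ℕ} [NeZero N] (φ : ZMod N × ZMod N → ℝ)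

theorem sum_dCx_eq_zero : ∑ q, dCx N φ q = 0 := by
  simp only [dCx, ← Finset.sum_div, Finset.sum_sub_distrib, sum_comp_add_fst, sum_comp_sub_fst,
    sub_self, zero_div]

theorem sum_dCy_eq_zero : ∑ q, dCy N φ q = 0 := by
  simp only [dCy, ← Finset.sum_div, Finset.sum_sub_distrib, sum_comp_add_snd, sum_comp_sub_snd,
    sub_self, zero_div]

theorem sum_dLx_eq_zero : ∑ q, dLx N φ q = 0 := by
  simp only [dLx, ← Finset.sum_div, Finset.sum_add_distrib, Finset.sum_sub_distrib,
    sum_comp_add_fst, sum_comp_sub_fst, ← Finset.mul_sum]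
  ring

theorem sum_dLy_eq_zero : ∑ q, dLy N φ q = 0 := by
  simp only [dLy, ← Finset.sum_div, Finset.sum_add_distrib, Finset.sum_sub_distrib,
    sum_comp_add_snd, sum_comp_sub_snd, ← Finset.mul_sum]
  ring

theorem sum_dL2_eq_zero : ∑ q, dL2 N φ q = 0 := by
  simp only [dL2, Finset.sum_add_distrib, sum_dLx_eq_zero, sum_dLy_eq_zero, add_zero]

theorem sum_F2rho_eq_zero (lamt : ℝ) (ρ m n : ZMod N × ZMod N → ℝ) :
    ∑ q, F2rho N lamt ρ m n q = 0 := by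
  simp only [F2rho, Finset.sum_sub_distrib, Finset.sum_add_distrib, ← Finset.mul_sum,
    sum_dCx_eq_zero, sum_dCy_eq_zero, sum_dL2_eq_zero, add_zero, mul_zero, sub_zero]

end PeriodicSums

theorem mass_conservation_2d_general
    (N : ℕ) [NeZero N]
    (lam : ℝ → ℝ)
    (ρ m n : ℝ → ZMod N × ZMod N → ℝ)
    (hρ : ∀ t : ℝ, ∀ q : ZMod N × ZMod N,
      HasDerivAt (fun s => ρ s q) (-(F2rho N (lam t) (ρ t) (m t) (n t) q)) t) :
    ∀ t : ℝ, HasDerivAt (fun s => ∑ q : ZMod N × ZMod N, ρ s q) 0 t := by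
  intro t
  have hsum := HasDerivAt.fun_sum (u := Finset.univ) fun q _ => hρ t q
  rwa [Finset.sum_neg_distrib, sum_F2rho_eq_zero, neg_zero] at hsum

/-- Conservation of total mass for the 2D semidiscrete NSK scheme. -/
theorem mass_conservation_2d
    (N : ℕ) [NeZero N]
    (p : ℝ → ℝ) (μ κ : ℝ) (lam : ℝ → ℝ)
    (ρ m n : ℝ → ZMod N × ZMod N → ℝ)
    (hpos : ∀ t : ℝ, ∀ q : ZMod N × ZMod N, 0 < ρ t q)
    (hρ : ∀ t : ℝ, ∀ q : ZMod N × ZMod N,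
      HasDerivAt (fun s => ρ s q) (-(F2rho N (lam t) (ρ t) (m t) (n t) q)) t)
    (hm : ∀ t : ℝ, ∀ q : ZMod N × ZMod N,
      HasDerivAt (fun s => m s q) (-(F2m N p μ κ (lam t) (ρ t) (m t) (n t) q)) t)
    (hn : ∀ t : ℝ, ∀ q : ZMod N × ZMod N,
      HasDerivAt (fun s => n s q) (-(F2n N p μ κ (lam t) (ρ t) (m t) (n t) q)) t) :
    ∀ t : ℝ, HasDerivAt (fun s => ∑ q : ZMod N × ZMod N, ρ s q) 0 t :=
  mass_conservation_2d_general N lam ρ m n hρ
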